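/- Let G = (V, E) be a finite simple graph whose vertex set is fair (equally many red and blue vertices). Let S* ⊆ V be a nonempty subset of maximum density among all subsets of V, and assume without loss of generality that |S* ∩ Blue| ≥ |S* ∩ Red|. Then there exists a set R' ⊆ Red \ S* with |R'| = |S* ∩ Blue| − |S* ∩ Red|; moreover, for every such R', the set T = S* ∪ R' is fair, satisfies |T| ≤ 2|S*|, and satisfies 2·D_T(G) ≥ D_S(G) for every fair subset S ⊆ V. -/

import Mathlib

open scoped Classical in
/-- Density of a vertex subset `S` in a simple graph `G`:
`2·e(S)/|S|` (the empty set has density 0). -/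
noncomputable def density {W : Type*} (G : SimpleGraph W) (S : Finset W) : ℝ :=
  (∑ i ∈ S, ∑ j ∈ S, if G.Adj i j then (1:ℝ) else 0) / S.card

/-!
A densest set `S*` is at least as dense as any fair set. Topping `S*` up with red vertices
outside it until it is balanced at most doubles its size and loses no edges, so the density
drops by at most a factor 2; the red vertices needed exist because the whole graph is fair.
-/

open Finset

theorem Finset.sum_sum_le_sum_sum_of_subset {α : Type*} {f : α → α → ℝ}
    (hf : ∀ i j, 0 ≤ f i j) {S T : Finset α} (hST : S ⊆ T) :
    ∑ i ∈ S, ∑ j ∈ S, f i j ≤ ∑ i ∈ T, ∑ j ∈ T, f i j :=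
  calc ∑ i ∈ S, ∑ j ∈ S, f i j
      ≤ ∑ i ∈ S, ∑ j ∈ T, f i j :=
        sum_le_sum fun i _ => sum_le_sum_of_subset_of_nonneg hST fun j _ _ => hf i j
    _ ≤ ∑ i ∈ T, ∑ j ∈ T, f i j :=
        sum_le_sum_of_subset_of_nonneg hST fun i _ _ => sum_nonneg fun j _ => hf i j

theorem density_le_mul_density_of_subset {W : Type*} (G : SimpleGraph W) {S T : Finset W}
    (hST : S ⊆ T) (hS : S.Nonempty) {c : ℝ} (hc : (T.card : ℝ) ≤ c * S.card) :
    density G S ≤ c * density G T := by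
  classical
  unfold density
  set e : Finset W → ℝ := fun U => ∑ i ∈ U, ∑ j ∈ U, if G.Adj i j then (1:ℝ) else 0
  have he_nonneg : 0 ≤ e T :=
    sum_nonneg fun i _ => sum_nonneg fun j _ => by positivity
  have he_mono : e S ≤ e T :=
    sum_sum_le_sum_sum_of_subset (fun i j => by positivity) hST
  have hS_pos : (0 : ℝ) < S.card := by exact_mod_cast hS.card_pos
  have hT_pos : (0 : ℝ) < T.card := by exact_mod_cast (hS.mono hST).card_pos
  change e S / S.card ≤ c * (e T / T.card)
  rw [div_le_iff₀ hS_pos, mul_div_assoc', div_mul_eq_mul_div, le_div_iff₀ hT_pos]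
  calc e S * T.card ≤ e T * (c * S.card) := mul_le_mul he_mono hc hT_pos.le he_nonneg
    _ = c * e T * S.card := by ring

section Balancing

variable {V : Type*} [DecidableEq V] {Red S R' : Finset V}

theorem card_sdiff_sub_card_inter_le_card_sdiff [Fintype V] (hfair : Red.card = Redᶜ.card) :
    (S \ Red).card - (S ∩ Red).card ≤ (Red \ S).card := by
  have hblue : (S \ Red).card ≤ Redᶜ.card :=
    card_le_card fun x hx => mem_compl.mpr (mem_sdiff.mp hx).2
  have hred : (Red \ S).card + (S ∩ Red).card = Red.card := by
    rw [inter_comm]; exact card_sdiff_add_card_inter Red S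
  omega

theorem card_union_inter_eq_card_union_sdiff (hR' : R' ⊆ Red \ S)
    (hcard : R'.card = (S \ Red).card - (S ∩ Red).card)
    (hbal : (S ∩ Red).card ≤ (S \ Red).card) :
    ((S ∪ R') ∩ Red).card = ((S ∪ R') \ Red).card := by
  have hR'Red : R' ⊆ Red := hR'.trans sdiff_subset
  have hdisj : Disjoint (S ∩ Red) R' :=
    disjoint_left.mpr fun x hx hx' => (mem_sdiff.mp (hR' hx')).2 (mem_inter.mp hx).1
  have hred : (S ∪ R') ∩ Red = (S ∩ Red) ∪ R' := by
    rw [union_inter_distrib_right, inter_eq_left.mpr hR'Red]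
  have hblue : (S ∪ R') \ Red = S \ Red := by
    rw [union_sdiff_distrib, sdiff_eq_empty_iff_subset.mpr hR'Red, union_empty]
  rw [hred, hblue, card_union_of_disjoint hdisj, hcard]
  omega

theorem card_union_le_two_mul (hcard : R'.card = (S \ Red).card - (S ∩ Red).card) :
    (S ∪ R').card ≤ 2 * S.card := by
  have := card_union_le S R'
  have := card_le_card (sdiff_subset : S \ Red ⊆ S)
  omega

end Balancing

theorem fair_two_approx
    {V : Type*} [Fintype V] [DecidableEq V] (G : SimpleGraph V)
    (Red : Finset V) (hfairG : Red.card = Redᶜ.card)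
    (Sstar : Finset V) (hne : Sstar.Nonempty)
    (hopt : ∀ R : Finset V, density G R ≤ density G Sstar)
    (hwlog : (Sstar ∩ Red).card ≤ (Sstar \ Red).card) :
    (∃ R' ⊆ Red \ Sstar, R'.card = (Sstar \ Red).card - (Sstar ∩ Red).card) ∧
    ∀ R' ⊆ Red \ Sstar, R'.card = (Sstar \ Red).card - (Sstar ∩ Red).card →
      ((Sstar ∪ R') ∩ Red).card = ((Sstar ∪ R') \ Red).card ∧
      (Sstar ∪ R').card ≤ 2 * Sstar.card ∧
      ∀ S : Finset V, (S ∩ Red).card = (S \ Red).card →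
        density G S ≤ 2 * density G (Sstar ∪ R') := by
  refine ⟨exists_subset_card_eq (card_sdiff_sub_card_inter_le_card_sdiff hfairG),
    fun R' hR' hcard => ?_⟩
  have hsize := card_union_le_two_mul hcard
  refine ⟨card_union_inter_eq_card_union_sdiff hR' hcard hwlog, hsize, fun S _ => ?_⟩
  calc density G S ≤ density G Sstar := hopt S
    _ ≤ 2 * density G (Sstar ∪ R') :=
      density_le_mul_density_of_subset G subset_union_left hne (by exact_mod_cast hsize)
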